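/- Let S be a semiring (commutative, possibly without neutral elements) that is additively divisible, torsion (every element has finite order), and finitely generated. Then S is additively idempotent. -/

import Mathlib

/-!
Torsion gives every element `a` some `N ≥ 1` for which `N·a` is additively idempotent, and then
so is `(N t)·a = t·(N·a)` for every `t ≥ 1`. Taking for `N` a common multiple over a finite
generating set, the elements `x` with `N·x` idempotent contain the generators and are closed
under addition and, by distributivity, under multiplication, so they are all of `S`.
Divisibility writes every `a` as `N·b`, hence `a` itself is idempotent.
-/

/-- `nmul n a` is the `n`-fold sum `a + ⋯ + a` (for `n ≥ 1`; `nmul 0 a = a` is junk). -/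
def nmul {S : Type*} [Add S] (n : ℕ) (a : S) : S :=
  Nat.rec a (fun _ b => b + a) (n - 1)

/-- The subsemiring generated by `A`: the smallest subset of `S` containing `A`
and closed under addition and multiplication. -/
def genClosure {S : Type*} [Add S] [Mul S] (A : Set S) : Set S :=
  ⋂₀ {T : Set S | A ⊆ T ∧ (∀ x ∈ T, ∀ y ∈ T, x + y ∈ T) ∧ (∀ x ∈ T, ∀ y ∈ T, x * y ∈ T)}

section Nmul

variable {S : Type*}

theorem nmul_succ [Add S] (a : S) {n : ℕ} (hn : 1 ≤ n) : nmul (n + 1) a = nmul n a + a := by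
  obtain ⟨n, rfl⟩ := Nat.exists_eq_add_of_le' hn
  rfl

theorem nmul_eq_self_of_add_self_eq [Add S] {e : S} (he : e + e = e) {n : ℕ} (hn : 1 ≤ n) :
    nmul n e = e := by
  induction n, hn using Nat.le_induction with
  | base => rfl
  | succ n hn ih => rw [nmul_succ e hn, ih, he]

theorem nmul_mul [AddSemigroup S] [Mul S] (hdr : ∀ a b c : S, (a + b) * c = a * c + b * c)
    (a b : S) {n : ℕ} (hn : 1 ≤ n) : nmul n (a * b) = nmul n a * b := by
  induction n, hn using Nat.le_induction with
  | base => rfl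
  | succ n hn ih => rw [nmul_succ _ hn, ih, nmul_succ a hn, hdr]

theorem nmul_add [AddCommSemigroup S] (a b : S) {n : ℕ} (hn : 1 ≤ n) :
    nmul n (a + b) = nmul n a + nmul n b := by
  induction n, hn using Nat.le_induction with
  | base => rfl
  | succ n hn ih => rw [nmul_succ _ hn, ih, nmul_succ a hn, nmul_succ b hn, add_add_add_comm]

variable [AddSemigroup S]

theorem add_nmul (a : S) {p q : ℕ} (hp : 1 ≤ p) (hq : 1 ≤ q) :
    nmul (p + q) a = nmul p a + nmul q a := by
  induction q, hq using Nat.le_induction with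
  | base => exact nmul_succ a hp
  | succ q hq ih =>
      rw [← Nat.add_assoc, nmul_succ a (by omega), ih, nmul_succ a hq, add_assoc]

theorem mul_nmul (a : S) {m n : ℕ} (hm : 1 ≤ m) (hn : 1 ≤ n) :
    nmul (m * n) a = nmul n (nmul m a) := by
  induction n, hn using Nat.le_induction with
  | base => rw [mul_one]; rfl
  | succ n hn ih => rw [Nat.mul_succ, add_nmul a (Nat.mul_pos hm hn) hm, ih, nmul_succ _ hn]

theorem nmul_add_eq_of_nmul_eq {a : S} {p q : ℕ} (hp : 1 ≤ p) (hq : 1 ≤ q)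
    (h : nmul p a = nmul q a) (j : ℕ) : nmul (p + j) a = nmul (q + j) a := by
  rcases j.eq_zero_or_pos with rfl | hj
  · exact h
  · rw [add_nmul a hp hj, add_nmul a hq hj, h]

theorem nmul_add_mul_eq_of_nmul_add_eq {a : S} {m k : ℕ} (hm : 1 ≤ m)
    (h : nmul (m + k) a = nmul m a) (t : ℕ) : nmul (m + k * t) a = nmul m a := by
  induction t with
  | zero => rfl
  | succ t ih =>
      rw [show m + k * (t + 1) = m + k + k * t by ring]
      exact (nmul_add_eq_of_nmul_eq (by omega) hm h _).trans ih

theorem exists_nmul_add_self_eq_of_nmul_eq {a : S} {m n : ℕ} (hm : 1 ≤ m) (hn : 1 ≤ n)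
    (hne : m ≠ n) (h : nmul m a = nmul n a) :
    ∃ N, 1 ≤ N ∧ nmul N a + nmul N a = nmul N a := by
  wlog hlt : m < n generalizing m n
  · exact this hn hm hne.symm h.symm (by omega)
  obtain ⟨k, rfl⟩ := Nat.exists_eq_add_of_lt hlt
  -- `j ↦ j·a` is periodic with period `k + 1` from `j = m` on, and `N = m + m k ≥ m` is a
  -- multiple of that period, so `(N + N)·a = N·a`.
  have hper := nmul_add_eq_of_nmul_eq (by omega) hm
    (nmul_add_mul_eq_of_nmul_add_eq (k := k + 1) hm h.symm m) (m * k)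
  have hN : 1 ≤ m + m * k := Nat.le_add_right_of_le hm
  refine ⟨m + m * k, hN, ?_⟩
  rw [← add_nmul a hN hN, ← hper]
  congr 1
  ring

theorem nmul_mul_add_self_eq {a : S} {N : ℕ} (hN : 1 ≤ N)
    (h : nmul N a + nmul N a = nmul N a) {t : ℕ} (ht : 1 ≤ t) :
    nmul (N * t) a + nmul (N * t) a = nmul (N * t) a := by
  rw [mul_nmul a hN ht, nmul_eq_self_of_add_self_eq h ht, h]

theorem Set.Finite.exists_nmul_add_self_eq {A : Set S} (hA : A.Finite)
    (h : ∀ a ∈ A, ∃ N, 1 ≤ N ∧ nmul N a + nmul N a = nmul N a) :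
    ∃ N, 1 ≤ N ∧ ∀ a ∈ A, nmul N a + nmul N a = nmul N a := by
  choose! N hN1 hN using h
  have hprod : 0 < ∏ a ∈ hA.toFinset, N a :=
    Finset.prod_pos fun a ha => hN1 a (hA.mem_toFinset.1 ha)
  refine ⟨_, hprod, fun a ha => ?_⟩
  obtain ⟨t, ht⟩ := Finset.dvd_prod_of_mem N (hA.mem_toFinset.2 ha)
  rw [ht] at hprod ⊢
  exact nmul_mul_add_self_eq (hN1 a ha) (hN a ha) (Nat.pos_of_mul_pos_left hprod)

end Nmul

theorem genClosure_subset {S : Type*} [Add S] [Mul S] {A T : Set S} (hA : A ⊆ T)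
    (hadd : ∀ x ∈ T, ∀ y ∈ T, x + y ∈ T) (hmul : ∀ x ∈ T, ∀ y ∈ T, x * y ∈ T) :
    genClosure A ⊆ T :=
  Set.sInter_subset_of_mem ⟨hA, hadd, hmul⟩

theorem nmul_add_self_eq_of_genClosure_eq_univ {S : Type*} [AddCommSemigroup S] [Mul S]
    (hdr : ∀ a b c : S, (a + b) * c = a * c + b * c) {A : Set S} (hA : genClosure A = Set.univ)
    {N : ℕ} (hN : 1 ≤ N) (hNA : ∀ a ∈ A, nmul N a + nmul N a = nmul N a) (x : S) :
    nmul N x + nmul N x = nmul N x := by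
  refine genClosure_subset (T := {x | nmul N x + nmul N x = nmul N x}) hNA ?_ ?_
    (hA ▸ Set.mem_univ x)
  · intro x hx y hy
    rw [Set.mem_ofPred_eq, nmul_add x y hN, add_add_add_comm, hx, hy]
  · intro x hx y _
    rw [Set.mem_ofPred_eq, nmul_mul hdr x y hN, ← hdr, hx]

theorem stmt_9_general {S : Type*} [AddCommSemigroup S] [CommSemigroup S]
    (hdr : ∀ a b c : S, (a + b) * c = a * c + b * c)
    (hdiv : ∀ a : S, ∀ n : ℕ, 1 ≤ n → ∃ b : S, nmul n b = a)
    (htor : ∀ a : S, ∃ m n : ℕ, 1 ≤ m ∧ 1 ≤ n ∧ m ≠ n ∧ nmul m a = nmul n a)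
    (hfg : ∃ A : Set S, A.Finite ∧ genClosure A = Set.univ) :
    ∀ a : S, a + a = a := by
  obtain ⟨A, hAfin, hAgen⟩ := hfg
  obtain ⟨N, hN, hNA⟩ := hAfin.exists_nmul_add_self_eq fun a _ => by
    obtain ⟨m, n, hm, hn, hne, h⟩ := htor a
    exact exists_nmul_add_self_eq_of_nmul_eq hm hn hne h
  intro a
  obtain ⟨b, rfl⟩ := hdiv a N hN
  exact nmul_add_self_eq_of_genClosure_eq_univ hdr hAgen hN hNA b

theorem stmt_9 {S : Type*} [AddCommSemigroup S] [CommSemigroup S]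
    (hdl : ∀ a b c : S, a * (b + c) = a * b + a * c)
    (hdr : ∀ a b c : S, (a + b) * c = a * c + b * c)
    (hdiv : ∀ a : S, ∀ n : ℕ, 1 ≤ n → ∃ b : S, nmul n b = a)
    (htor : ∀ a : S, ∃ m n : ℕ, 1 ≤ m ∧ 1 ≤ n ∧ m ≠ n ∧ nmul m a = nmul n a)
    (hfg : ∃ A : Set S, A.Finite ∧ genClosure A = Set.univ) :
    ∀ a : S, a + a = a :=
  stmt_9_general hdr hdiv htor hfg
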